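/- Let 𝒜 be a finite set with |𝒜| = A, let T ≥ 1 with A ≤ T, and let ℓ_1, …, ℓ_T ∈ ℝ^𝒜. Let η_t(a) > 0 for t = 0, …, T and a ∈ 𝒜 be non-increasing in t for each a, with η_0(a) = η_0 for all a. For t = 0, …, T let ψ_t(p) = Σ_{a∈𝒜} (1/η_t(a)) p(a) ln p(a), and for t = 1, …, T let p_t be a minimizer over Δ(𝒜) of p ↦ ⟨p, Σ_{τ=1}^{t−1} ℓ_τ⟩ + ψ_t(p); assume p_t(a) > 0 for all t, a. Suppose η_t(a) ℓ_t(a) ≥ −1 for all t, a. Then for every u ∈ Δ(𝒜), Σ_{t=1}^{T} ⟨p_t − u, ℓ_t⟩ ≤ (ln A)/η_0 + 6 Σ_{t=1}^{T} Σ_{a∈𝒜} (1/η_t(a) − 1/η_{t−1}(a)) ξ_t(a) + Σ_{t=1}^{T} Σ_{a∈𝒜} η_t(a) p_t(a) ℓ_t(a)² + (1/T²) Σ_{t=1}^{T} ⟨−u + (1/A)𝟏, ℓ_t⟩, where ξ_t(a) = min{ p_t(a) ln T, 1 − p_t(a) } and 𝟏 ∈ ℝ^𝒜 is the all-ones vector.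 -/

import Mathlib

/-!
Write `F_t(q) = ⟨q, L_{t-1}⟩ + ∑ₐ q(a) log q(a) / η_t(a)` for the FTRL objective of round `t`.
First-order optimality of `p_t` on the simplex gives `F_t(p_t) + D_t(q, p_t) ≤ F_t(q)`, where
`D_t` is the Bregman divergence of the weighted entropy, and the Fenchel–Young inequality for
`x log x - x` together with `exp y ≤ 1 + y + y²` (valid for `y = -η ℓ ≤ 1`) gives
`⟨p_t - q, ℓ_t⟩ - D_t(q, p_t) ≤ ∑ₐ η_t p_t ℓ_t²`. Chaining these with `q = p_{t+1}` telescopes;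
each change of regulariser costs `∑ₐ (1/η_t - 1/η_{t-1}) (-p_t log p_t)`, and the last round is
compared with the mixture `w = (1 - T⁻²) u + T⁻² · uniform`, which produces the final term.

The entropy terms are bounded by `-p log p ≤ 6 min(p log T, 1 - p) + T⁻⁶`. The slack `T⁻⁶`
telescopes to `∑ₐ T⁻⁶/η_T(a)`, which is paid for by the entropy of `w`: every coordinate of `w`
lies in `[T⁻³, 1 - T⁻²/2]` once there are at least two actions. With a single action the regret
vanishes identically.
-/

open Finset Real

namespace Real

theorem exp_le_one_add_add_sq {x : ℝ} (hx : x ≤ 1) : exp x ≤ 1 + x + x ^ 2 := by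
  rcases le_or_gt (-1) x with h | h
  · have := (abs_le.1 (abs_exp_sub_one_sub_id_le (abs_le.2 ⟨h, hx⟩))).2
    linarith
  · nlinarith [exp_le_one_iff.2 (by linarith : x ≤ 0)]

/-- Fenchel–Young inequality for `x ↦ x log x - x`, whose convex conjugate is `exp`. -/
theorem mul_sub_mul_log_add_le_exp {x : ℝ} (hx : 0 ≤ x) (y : ℝ) :
    x * y - x * log x + x ≤ exp y := by
  rcases hx.eq_or_lt with rfl | hx
  · simpa using (exp_pos y).le
  · have h := mul_le_mul_of_nonneg_left (add_one_le_exp (y - log x)) hx.le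
    rw [exp_sub, exp_log hx, mul_div_cancel₀ _ hx.ne'] at h
    linarith

theorem negMulLog_le_mul_log_add_inv {x c : ℝ} (hx : 0 ≤ x) (hc : 0 < c) :
    negMulLog x ≤ x * log c + c⁻¹ - x := by
  have h := mul_sub_mul_log_add_le_exp hx (-log c)
  rw [exp_neg, exp_log hc] at h
  unfold negMulLog
  linarith

theorem mul_one_sub_le_negMulLog {x : ℝ} (hx : 0 ≤ x) : x * (1 - x) ≤ negMulLog x := by
  rcases hx.eq_or_lt with rfl | hx
  · simp
  · have := mul_le_mul_of_nonneg_left (log_le_sub_one_of_pos hx) hx.le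
    unfold negMulLog
    linarith

theorem negMulLog_le_six_mul_min_add {x T : ℝ} (hx₀ : 0 ≤ x) (hx₁ : x ≤ 1) (hT : 0 < T) :
    negMulLog x ≤ 6 * min (x * log T) (1 - x) + 1 / T ^ 6 := by
  have hlog := negMulLog_le_mul_log_add_inv hx₀ (pow_pos hT 6)
  rw [log_pow, Nat.cast_ofNat, ← one_div] at hlog
  have hone_sub := negMulLog_le_one_sub_self hx₀
  have hslack : 0 ≤ 1 / T ^ 6 := by positivity
  rw [mul_min_of_nonneg _ _ (by norm_num : (0 : ℝ) ≤ 6), min_add]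
  exact le_min (by linarith) (by linarith)

end Real

noncomputable def mulLogBregman (q p : ℝ) : ℝ := q * (log q - log p) - q + p

theorem sub_mul_sub_mulLogBregman_le {p q η ℓ : ℝ} (hp : 0 < p) (hq : 0 ≤ q) (hη : 0 < η)
    (hηℓ : -1 ≤ η * ℓ) :
    (p - q) * ℓ - 1 / η * mulLogBregman q p ≤ η * p * ℓ ^ 2 := by
  have hfy := mul_sub_mul_log_add_le_exp hq (log p - η * ℓ)
  rw [exp_sub, exp_log hp] at hfy
  have hexp := exp_le_one_add_add_sq (x := -(η * ℓ)) (by linarith)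
  rw [exp_neg] at hexp
  have hB : p - q * (η * ℓ) - p * (exp (η * ℓ))⁻¹ ≤ mulLogBregman q p := by
    unfold mulLogBregman; rw [div_eq_mul_inv] at hfy; linarith
  rw [one_div_mul_eq_div, sub_le_iff_le_add, ← sub_le_iff_le_add', le_div_iff₀ hη]
  nlinarith [mul_le_mul_of_nonneg_left hexp hp.le]

theorem sum_Icc_sub_sub_one (f : ℕ → ℝ) (T : ℕ) :
    ∑ t ∈ Icc 1 T, (f t - f (t - 1)) = f T - f 0 := by
  induction T with
  | zero => simp
  | succ n ih => rw [sum_Icc_succ_top (by omega), ih]; simp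

theorem sum_Icc_le_of_telescoping {x a b : ℕ → ℝ} {c y : ℝ} {T : ℕ} (hT : 1 ≤ T)
    (hfirst : -x 1 ≤ c + b 1) (hstep : ∀ t, 1 ≤ t → t < T → x t + a t ≤ x (t + 1) + b (t + 1))
    (hlast : x T + a T ≤ y) :
    ∑ t ∈ Icc 1 T, a t ≤ c + ∑ t ∈ Icc 1 T, b t + y := by
  have hpartial : ∀ n, 1 ≤ n → n ≤ T → ∑ t ∈ Ico 1 n, a t ≤ x n + c + ∑ t ∈ Icc 1 n, b t := by
    intro n hn
    induction n, hn using Nat.le_induction with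
    | base => intro _; simp only [Ico_self, sum_empty, Icc_self, sum_singleton]; linarith
    | succ n hn ih =>
      intro hnT
      rw [sum_Ico_succ_top hn, sum_Icc_succ_top (by omega)]
      linarith [ih (by omega), hstep n hn (by omega)]
  have hlastSum := sum_Ico_succ_top hT a
  rw [Ico_add_one_right_eq_Icc] at hlastSum
  linarith [hpartial T hT le_rfl]

theorem nonempty_of_mem_stdSimplex {ι : Type*} [Fintype ι] {w : ι → ℝ}
    (hw : w ∈ stdSimplex ℝ ι) : Nonempty ι := by
  by_contra h
  rw [not_nonempty_iff] at h
  rwa [stdSimplex_of_isEmpty_index] at hw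

theorem sum_negMulLog_le_log_card {ι : Type*} [Fintype ι] {p : ι → ℝ} (hp : p ∈ stdSimplex ℝ ι) :
    ∑ i, negMulLog (p i) ≤ log (Fintype.card ι) := by
  have hcard : (0 : ℝ) < Fintype.card ι := by
    have := nonempty_of_mem_stdSimplex hp
    exact_mod_cast Fintype.card_pos
  calc ∑ i, negMulLog (p i)
      ≤ ∑ i, (p i * log (Fintype.card ι) + (Fintype.card ι : ℝ)⁻¹ - p i) :=
        sum_le_sum fun i _ => negMulLog_le_mul_log_add_inv (hp.1 i) hcard
    _ = log (Fintype.card ι) := by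
        rw [sum_sub_distrib, sum_add_distrib, ← sum_mul, hp.2, sum_const, card_univ,
          nsmul_eq_mul, mul_inv_cancel₀ hcard.ne']
        ring

section

variable {𝒜 : Type*}

def cumLoss (ℓ : ℕ → 𝒜 → ℝ) (t : ℕ) (a : 𝒜) : ℝ := ∑ τ ∈ Icc 1 t, ℓ τ a

@[simp]
theorem cumLoss_zero (ℓ : ℕ → 𝒜 → ℝ) : cumLoss ℓ 0 = 0 := by
  ext a
  simp [cumLoss]

theorem cumLoss_sub_one_add (ℓ : ℕ → 𝒜 → ℝ) {t : ℕ} (ht : 1 ≤ t) :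
    cumLoss ℓ (t - 1) + ℓ t = cumLoss ℓ t := by
  obtain ⟨s, rfl⟩ := Nat.exists_eq_add_of_le' ht
  ext a
  simp [cumLoss, sum_Icc_succ_top]

variable [Fintype 𝒜]

noncomputable def ftrlObjective (C β r : 𝒜 → ℝ) : ℝ :=
  ∑ a, r a * C a + ∑ a, β a * (r a * log (r a))

theorem hasFDerivAt_ftrlObjective (C β : 𝒜 → ℝ) {p : 𝒜 → ℝ} (hp : ∀ a, p a ≠ 0) :
    HasFDerivAt (ftrlObjective C β)
      (∑ a, (C a + β a * (log (p a) + 1)) • (ContinuousLinearMap.proj a : (𝒜 → ℝ) →L[ℝ] ℝ)) p := by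
  have h : ∀ a, HasFDerivAt (fun r : 𝒜 → ℝ => r a * C a + β a * (r a * log (r a)))
      ((C a + β a * (log (p a) + 1)) • (ContinuousLinearMap.proj a : (𝒜 → ℝ) →L[ℝ] ℝ)) p := by
    intro a
    have hproj := hasFDerivAt_apply (𝕜 := ℝ) a p
    refine ((hproj.mul_const (C a)).add
      (((hasDerivAt_mul_log (hp a)).comp_hasFDerivAt p hproj).const_mul (β a))).congr_fderiv ?_
    ext v
    simp only [add_apply, smul_apply, ContinuousLinearMap.proj_apply, smul_eq_mul]
    ring
  have hF : ftrlObjective C β = fun r => ∑ a, (r a * C a + β a * (r a * log (r a))) := by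
    ext r; simp only [ftrlObjective, sum_add_distrib]
  rw [hF]
  exact HasFDerivAt.fun_sum fun a _ => h a

theorem ftrlObjective_add_sum_mulLogBregman_le {C β p q : 𝒜 → ℝ}
    (hmin : IsMinOn (ftrlObjective C β) (stdSimplex ℝ 𝒜) p) (hp : p ∈ stdSimplex ℝ 𝒜)
    (hp₀ : ∀ a, 0 < p a) (hq : q ∈ stdSimplex ℝ 𝒜) :
    ftrlObjective C β p + ∑ a, β a * mulLogBregman (q a) (p a) ≤ ftrlObjective C β q := by
  have hfirst := hmin.localize.hasFDerivWithinAt_nonneg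
    (hasFDerivAt_ftrlObjective C β fun a => (hp₀ a).ne').hasFDerivWithinAt
    (sub_mem_posTangentConeAt_of_segment_subset ((convex_stdSimplex ℝ 𝒜).segment_subset hp hq))
  simp only [FunLike.coe_sum, Finset.sum_apply, smul_apply,
    ContinuousLinearMap.proj_apply, smul_eq_mul, Pi.sub_apply] at hfirst
  have hsplit : ftrlObjective C β q = ftrlObjective C β p
      + ∑ a, (C a + β a * (log (p a) + 1)) * (q a - p a)
      + ∑ a, β a * mulLogBregman (q a) (p a) := by
    simp only [ftrlObjective, mulLogBregman, ← sum_add_distrib]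
    exact sum_congr rfl fun a _ => by ring
  linarith

theorem ftrlObjective_add_loss_le {C ℓ η p q : 𝒜 → ℝ} (hη : ∀ a, 0 < η a)
    (hηℓ : ∀ a, -1 ≤ η a * ℓ a)
    (hmin : IsMinOn (ftrlObjective C fun a => 1 / η a) (stdSimplex ℝ 𝒜) p)
    (hp : p ∈ stdSimplex ℝ 𝒜) (hp₀ : ∀ a, 0 < p a) (hq : q ∈ stdSimplex ℝ 𝒜) :
    ftrlObjective C (fun a => 1 / η a) p + ∑ a, p a * ℓ a
      ≤ ftrlObjective (C + ℓ) (fun a => 1 / η a) q + ∑ a, η a * p a * ℓ a ^ 2 := by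
  have hopt := ftrlObjective_add_sum_mulLogBregman_le hmin hp hp₀ hq
  have hstab : ∑ a, ((p a - q a) * ℓ a - 1 / η a * mulLogBregman (q a) (p a))
      ≤ ∑ a, η a * p a * ℓ a ^ 2 :=
    sum_le_sum fun a _ => sub_mul_sub_mulLogBregman_le (hp₀ a) (hq.1 a) (hη a) (hηℓ a)
  have hlin : ftrlObjective (C + ℓ) (fun a => 1 / η a) q
      = ftrlObjective C (fun a => 1 / η a) q + ∑ a, q a * ℓ a := by
    simp only [ftrlObjective, Pi.add_apply, mul_add, sum_add_distrib]
    ring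
  simp only [sum_sub_distrib, sub_mul] at hstab
  linarith

theorem ftrlObjective_eq_add_sum_negMulLog (C β β' q : 𝒜 → ℝ) :
    ftrlObjective C β q = ftrlObjective C β' q + ∑ a, (β' a - β a) * negMulLog (q a) := by
  simp only [ftrlObjective, negMulLog, add_assoc, ← sum_add_distrib]
  exact sum_congr rfl fun a _ => by ring

theorem neg_ftrlObjective_zero_le {β p : 𝒜 → ℝ} {η₀ : ℝ} (hη₀ : 0 ≤ η₀)
    (hp : p ∈ stdSimplex ℝ 𝒜) :
    -ftrlObjective 0 β p ≤ log (Fintype.card 𝒜) / η₀ + ∑ a, (β a - 1 / η₀) * negMulLog (p a) := by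
  have hent := div_le_div_of_nonneg_right (sum_negMulLog_le_log_card hp) hη₀
  have hsplit : -ftrlObjective 0 β p
      = (∑ a, negMulLog (p a)) / η₀ + ∑ a, (β a - 1 / η₀) * negMulLog (p a) := by
    simp only [ftrlObjective, Pi.zero_apply, mul_zero, sum_const_zero, zero_add, sum_div,
      ← sum_add_distrib, ← sum_neg_distrib, negMulLog]
    exact sum_congr rfl fun a _ => by ring
  linarith

theorem ftrl_regret_le {ℓ η p : ℕ → 𝒜 → ℝ} {η₀ : ℝ} {T : ℕ} (hT : 1 ≤ T)
    (hη : ∀ t, 1 ≤ t → t ≤ T → ∀ a, 0 < η t a) (hη₀ : 0 ≤ η₀) (hη_init : ∀ a, η 0 a = η₀)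
    (hp : ∀ t, 1 ≤ t → t ≤ T → p t ∈ stdSimplex ℝ 𝒜)
    (hp₀ : ∀ t, 1 ≤ t → t ≤ T → ∀ a, 0 < p t a)
    (hmin : ∀ t, 1 ≤ t → t ≤ T →
      IsMinOn (ftrlObjective (cumLoss ℓ (t - 1)) fun a => 1 / η t a) (stdSimplex ℝ 𝒜) (p t))
    (hℓ : ∀ t, 1 ≤ t → t ≤ T → ∀ a, η t a * ℓ t a ≥ -1)
    {w : 𝒜 → ℝ} (hw : w ∈ stdSimplex ℝ 𝒜) :
    ∑ t ∈ Icc 1 T, ∑ a, (p t a - w a) * ℓ t a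
      ≤ log (Fintype.card 𝒜) / η₀
        + ∑ t ∈ Icc 1 T, ∑ a, (1 / η t a - 1 / η (t - 1) a) * negMulLog (p t a)
        + ∑ a, 1 / η T a * (w a * log (w a))
        + ∑ t ∈ Icc 1 T, ∑ a, η t a * p t a * ℓ t a ^ 2 := by
  set x : ℕ → ℝ := fun t => ftrlObjective (cumLoss ℓ (t - 1)) (fun a => 1 / η t a) (p t)
  have hround : ∀ t, 1 ≤ t → t ≤ T → ∀ q ∈ stdSimplex ℝ 𝒜,
      x t + (∑ a, p t a * ℓ t a - ∑ a, η t a * p t a * ℓ t a ^ 2)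
        ≤ ftrlObjective (cumLoss ℓ t) (fun a => 1 / η t a) q := by
    intro t h₁ h₂ q hq
    have h := ftrlObjective_add_loss_le (hη t h₁ h₂) (hℓ t h₁ h₂) (hmin t h₁ h₂) (hp t h₁ h₂)
      (hp₀ t h₁ h₂) hq
    rw [cumLoss_sub_one_add ℓ h₁] at h
    linarith
  have hfirst : -x 1 ≤ log (Fintype.card 𝒜) / η₀
      + ∑ a, (1 / η 1 a - 1 / η (1 - 1) a) * negMulLog (p 1 a) := by
    simpa only [x, Nat.sub_self, cumLoss_zero, hη_init] using
      neg_ftrlObjective_zero_le hη₀ (hp 1 le_rfl hT)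
  have hstep : ∀ t, 1 ≤ t → t < T →
      x t + (∑ a, p t a * ℓ t a - ∑ a, η t a * p t a * ℓ t a ^ 2)
        ≤ x (t + 1) + ∑ a, (1 / η (t + 1) a - 1 / η (t + 1 - 1) a) * negMulLog (p (t + 1) a) := by
    intro t h₁ h₂
    have h := hround t h₁ h₂.le (p (t + 1)) (hp (t + 1) (by omega) h₂)
    rwa [ftrlObjective_eq_add_sum_negMulLog _ _ fun a => 1 / η (t + 1) a] at h
  have h := sum_Icc_le_of_telescoping (x := x)
    (a := fun t => ∑ a, p t a * ℓ t a - ∑ a, η t a * p t a * ℓ t a ^ 2)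
    (b := fun t => ∑ a, (1 / η t a - 1 / η (t - 1) a) * negMulLog (p t a))
    hT hfirst hstep (hround T hT le_rfl w hw)
  have hw_loss : ∑ t ∈ Icc 1 T, ∑ a, w a * ℓ t a = ∑ a, w a * cumLoss ℓ T a := by
    rw [sum_comm]
    exact sum_congr rfl fun a _ => (mul_sum _ _ _).symm
  rw [ftrlObjective, ← hw_loss] at h
  simp only [sub_mul, sum_sub_distrib] at h ⊢
  linarith

theorem sum_mul_negMulLog_le {δ q : 𝒜 → ℝ} {T : ℝ} (hδ : ∀ a, 0 ≤ δ a)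
    (hq : q ∈ stdSimplex ℝ 𝒜) (hT : 0 < T) :
    ∑ a, δ a * negMulLog (q a)
      ≤ 6 * ∑ a, δ a * min (q a * log T) (1 - q a) + (∑ a, δ a) / T ^ 6 := by
  rw [mul_sum, sum_div, ← sum_add_distrib]
  refine sum_le_sum fun a _ => ?_
  have h := mul_le_mul_of_nonneg_left (negMulLog_le_six_mul_min_add (hq.1 a)
    (mem_Icc_of_mem_stdSimplex hq a).2 hT) (hδ a)
  exact h.trans_eq (by ring)

noncomputable def mixUniform (γ : ℝ) (u : 𝒜 → ℝ) (a : 𝒜) : ℝ :=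
  (1 - γ) * u a + γ * (1 / Fintype.card 𝒜)

theorem mixUniform_mem_stdSimplex {γ : ℝ} (hγ₀ : 0 ≤ γ) (hγ₁ : γ ≤ 1) {u : 𝒜 → ℝ}
    (hu : u ∈ stdSimplex ℝ 𝒜) : mixUniform γ u ∈ stdSimplex ℝ 𝒜 := by
  have : Nonempty 𝒜 := nonempty_of_mem_stdSimplex hu
  have hA : (0 : ℝ) < Fintype.card 𝒜 := by exact_mod_cast Fintype.card_pos
  refine ⟨fun a => add_nonneg (mul_nonneg (by linarith) (hu.1 a)) (by positivity), ?_⟩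
  simp only [mixUniform, sum_add_distrib, ← mul_sum, hu.2, sum_const, card_univ, nsmul_eq_mul]
  field_simp
  ring

theorem inv_pow_six_le_negMulLog_mixUniform {T : ℝ} (hA : 2 ≤ Fintype.card 𝒜)
    (hAT : (Fintype.card 𝒜 : ℝ) ≤ T) {u : 𝒜 → ℝ} (hu : u ∈ stdSimplex ℝ 𝒜) (a : 𝒜) :
    1 / T ^ 6 ≤ negMulLog (mixUniform (1 / T ^ 2) u a) := by
  have hA' : (2 : ℝ) ≤ Fintype.card 𝒜 := by exact_mod_cast hA
  obtain ⟨hu₀, hu₁⟩ := mem_Icc_of_mem_stdSimplex hu a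
  set s := 1 / T with hs
  have hs₀ : 0 < s := one_div_pos.2 (by linarith)
  have hs₁ : s ≤ 1 / 2 := one_div_le_one_div_of_le (by norm_num) (by linarith)
  have hsA : s ≤ 1 / (Fintype.card 𝒜 : ℝ) := one_div_le_one_div_of_le (by linarith) hAT
  have hA2 : 1 / (Fintype.card 𝒜 : ℝ) ≤ 1 / 2 := one_div_le_one_div_of_le (by norm_num) hA'
  have hs₂ : 0 ≤ 1 - s ^ 2 := by nlinarith
  have hlo : s ^ 3 ≤ mixUniform (1 / T ^ 2) u a := by
    simp only [mixUniform, ← one_div_pow, ← hs]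
    nlinarith [mul_nonneg hs₂ hu₀, mul_le_mul_of_nonneg_left hsA (sq_nonneg s)]
  have hhi : s ^ 2 / 2 ≤ 1 - mixUniform (1 / T ^ 2) u a := by
    simp only [mixUniform, ← one_div_pow, ← hs]
    nlinarith [mul_le_of_le_one_right hs₂ hu₁, mul_le_mul_of_nonneg_left hA2 (sq_nonneg s)]
  calc 1 / T ^ 6 = s ^ 6 := by rw [hs, one_div_pow]
    _ ≤ s ^ 3 * (s ^ 2 / 2) := by nlinarith [pow_pos hs₀ 5]
    _ ≤ mixUniform (1 / T ^ 2) u a * (1 - mixUniform (1 / T ^ 2) u a) :=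
        mul_le_mul hlo hhi (by positivity) ((pow_pos hs₀ 3).le.trans hlo)
    _ ≤ negMulLog (mixUniform (1 / T ^ 2) u a) :=
        mul_one_sub_le_negMulLog ((pow_pos hs₀ 3).le.trans hlo)

theorem penalty_add_regularizer_mixUniform_le {η p : ℕ → 𝒜 → ℝ} {T : ℕ}
    (hA : 2 ≤ Fintype.card 𝒜) (hAT : Fintype.card 𝒜 ≤ T)
    (hη : ∀ t ≤ T, ∀ a, 0 < η t a) (hη_mono : ∀ t, 1 ≤ t → t ≤ T → ∀ a, η t a ≤ η (t - 1) a)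
    (hp : ∀ t, 1 ≤ t → t ≤ T → p t ∈ stdSimplex ℝ 𝒜) {u : 𝒜 → ℝ} (hu : u ∈ stdSimplex ℝ 𝒜) :
    ∑ t ∈ Icc 1 T, ∑ a, (1 / η t a - 1 / η (t - 1) a) * negMulLog (p t a)
        + ∑ a, 1 / η T a
          * (mixUniform (1 / (T : ℝ) ^ 2) u a * log (mixUniform (1 / (T : ℝ) ^ 2) u a))
      ≤ 6 * ∑ t ∈ Icc 1 T, ∑ a,
          (1 / η t a - 1 / η (t - 1) a) * min (p t a * log T) (1 - p t a) := by
  have hT : (0 : ℝ) < T := by exact_mod_cast (show 0 < T by omega)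
  have hround : ∀ t ∈ Icc 1 T,
      ∑ a, (1 / η t a - 1 / η (t - 1) a) * negMulLog (p t a)
        ≤ 6 * ∑ a, (1 / η t a - 1 / η (t - 1) a) * min (p t a * log T) (1 - p t a)
          + (∑ a, (1 / η t a - 1 / η (t - 1) a)) / (T : ℝ) ^ 6 := by
    intro t ht
    obtain ⟨h₁, h₂⟩ := mem_Icc.1 ht
    refine sum_mul_negMulLog_le (fun a => sub_nonneg.2 ?_) (hp t h₁ h₂) hT
    exact one_div_le_one_div_of_le (hη t h₂ a) (hη_mono t h₁ h₂ a)
  have htelescope : ∑ t ∈ Icc 1 T, ∑ a, (1 / η t a - 1 / η (t - 1) a)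
      = ∑ a, (1 / η T a - 1 / η 0 a) := by
    rw [sum_comm]
    exact sum_congr rfl fun a _ => sum_Icc_sub_sub_one (fun t => 1 / η t a) T
  have hslack : (∑ a, (1 / η T a - 1 / η 0 a)) / (T : ℝ) ^ 6
      + ∑ a, 1 / η T a * (mixUniform (1 / (T : ℝ) ^ 2) u a
        * log (mixUniform (1 / (T : ℝ) ^ 2) u a)) ≤ 0 := by
    rw [sum_div, ← sum_add_distrib]
    refine sum_nonpos fun a _ => ?_
    have hw := inv_pow_six_le_negMulLog_mixUniform (T := T) hA (by exact_mod_cast hAT) hu a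
    have hβT := one_div_pos.2 (hη T le_rfl a)
    have hβ₀ := one_div_pos.2 (hη 0 (Nat.zero_le T) a)
    have hmul := mul_le_mul_of_nonneg_left hw hβT.le
    rw [negMulLog, neg_mul, mul_neg] at hmul
    rw [sub_div, div_eq_mul_one_div (1 / η T a)]
    linarith [div_nonneg hβ₀.le (pow_pos hT 6).le]
  have h := sum_le_sum hround
  rw [sum_add_distrib, ← mul_sum, ← sum_div, htelescope] at h
  linarith

theorem sum_sub_mul_eq_sum_sub_mixUniform_mul (ℓ p : ℕ → 𝒜 → ℝ) (u : 𝒜 → ℝ) (γ : ℝ)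
    (s : Finset ℕ) :
    ∑ t ∈ s, ∑ a, (p t a - u a) * ℓ t a
      = ∑ t ∈ s, ∑ a, (p t a - mixUniform γ u a) * ℓ t a
        + γ * ∑ t ∈ s, ∑ a, (-(u a) + 1 / Fintype.card 𝒜) * ℓ t a := by
  simp only [mul_sum, ← sum_add_distrib, mixUniform]
  exact sum_congr rfl fun t _ => sum_congr rfl fun a _ => by ring

theorem regret_le_of_card_eq_one (hA : Fintype.card 𝒜 = 1) {ℓ η p : ℕ → 𝒜 → ℝ} {T : ℕ}
    (hT : 1 ≤ T) (η₀ : ℝ) (hη : ∀ t, 1 ≤ t → t ≤ T → ∀ a, 0 < η t a)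
    (hp : ∀ t, 1 ≤ t → t ≤ T → p t ∈ stdSimplex ℝ 𝒜) {u : 𝒜 → ℝ} (hu : u ∈ stdSimplex ℝ 𝒜) :
    ∑ t ∈ Icc 1 T, ∑ a, (p t a - u a) * ℓ t a
      ≤ log (Fintype.card 𝒜) / η₀
        + 6 * ∑ t ∈ Icc 1 T, ∑ a, (1 / η t a - 1 / η (t - 1) a) * min (p t a * log T) (1 - p t a)
        + ∑ t ∈ Icc 1 T, ∑ a, η t a * p t a * ℓ t a ^ 2
        + 1 / (T : ℝ) ^ 2 * ∑ t ∈ Icc 1 T, ∑ a, (-(u a) + 1 / Fintype.card 𝒜) * ℓ t a := by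
  obtain ⟨_⟩ := Fintype.card_eq_one_iff_nonempty_unique.1 hA
  have hone : ∀ q ∈ stdSimplex ℝ 𝒜, q default = 1 := fun q hq => by simpa using hq.2
  have hlog : 0 ≤ log T := log_nonneg (by exact_mod_cast hT)
  have hstab : 0 ≤ ∑ t ∈ Icc 1 T, ∑ a, η t a * p t a * ℓ t a ^ 2 := by
    refine sum_nonneg fun t ht => sum_nonneg fun a _ => ?_
    have := (hη t (mem_Icc.1 ht).1 (mem_Icc.1 ht).2 a).le
    have := (hp t (mem_Icc.1 ht).1 (mem_Icc.1 ht).2).1 a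
    positivity
  have hpt : ∀ t ∈ Icc 1 T, p t default = 1 := fun t ht =>
    hone (p t) (hp t (mem_Icc.1 ht).1 (mem_Icc.1 ht).2)
  have hregret : ∑ t ∈ Icc 1 T, ∑ a, (p t a - u a) * ℓ t a = 0 :=
    sum_eq_zero fun t ht => by simp [hpt t ht, hone u hu]
  have hpenalty : ∑ t ∈ Icc 1 T, ∑ a,
      (1 / η t a - 1 / η (t - 1) a) * min (p t a * log T) (1 - p t a) = 0 :=
    sum_eq_zero fun t ht => by simp [hpt t ht, hlog]
  have hmix : ∑ t ∈ Icc 1 T, ∑ a, (-(u a) + 1 / Fintype.card 𝒜) * ℓ t a = 0 := by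
    simp [hone u hu]
  rw [hregret, hpenalty, hmix, hA, Nat.cast_one, log_one]
  simpa using hstab

end

/-- **FTRL with the Shannon entropy regularizer and coordinate-wise learning rates.**
Let `|𝒜| = A ≤ T`, `T ≥ 1`, losses `ℓ 1, …, ℓ T`, and learning rates `η t a > 0`
non-increasing in `t` with `η 0 a = η₀` for all `a`.  With
`ψ t p = ∑ a, (1 / η t a) * (p a * log (p a))`, let `p t` (for `1 ≤ t ≤ T`) minimize
`p ↦ ⟨p, ∑_{τ=1}^{t-1} ℓ τ⟩ + ψ t p` over the probability simplex, with all
coordinates strictly positive.  If `η t a * ℓ t a ≥ -1` for all `t, a`, then for every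
`u` in the probability simplex,
`∑_{t=1}^T ⟨p t - u, ℓ t⟩ ≤ (ln A)/η₀ + 6 ∑_t ∑_a (1/η t a - 1/η (t-1) a) ξ t a
  + ∑_t ∑_a η t a * p t a * (ℓ t a)² + (1/T²) ∑_t ⟨-u + (1/A) 𝟏, ℓ t⟩`,
where `ξ t a = min (p t a * ln T) (1 - p t a)`. -/
theorem shannon_ftrl_regret
    {𝒜 : Type*} [Fintype 𝒜] (A : ℕ) (hA : Fintype.card 𝒜 = A)
    (T : ℕ) (hT : 1 ≤ T) (hAT : A ≤ T)
    (ℓ : ℕ → 𝒜 → ℝ)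
    (η : ℕ → 𝒜 → ℝ) (η₀ : ℝ)
    (hη_pos : ∀ t ≤ T, ∀ a, 0 < η t a)
    (hη_mono : ∀ t, 1 ≤ t → t ≤ T → ∀ a, η t a ≤ η (t - 1) a)
    (hη_init : ∀ a, η 0 a = η₀)
    (ψ : ℕ → (𝒜 → ℝ) → ℝ)
    (hψ : ∀ t, ψ t = fun p : 𝒜 → ℝ => ∑ a, (1 / η t a) * (p a * Real.log (p a)))
    (p : ℕ → 𝒜 → ℝ)
    (hp_pos : ∀ t, 1 ≤ t → t ≤ T → ∀ a, 0 < p t a)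
    (hp_sum : ∀ t, 1 ≤ t → t ≤ T → ∑ a, p t a = 1)
    (hp_min : ∀ t, 1 ≤ t → t ≤ T → ∀ q : 𝒜 → ℝ, (∀ a, 0 ≤ q a) → ∑ a, q a = 1 →
      (∑ a, p t a * (∑ τ ∈ Finset.Icc 1 (t - 1), ℓ τ a)) + ψ t (p t)
        ≤ (∑ a, q a * (∑ τ ∈ Finset.Icc 1 (t - 1), ℓ τ a)) + ψ t q)
    (hℓ : ∀ t, 1 ≤ t → t ≤ T → ∀ a, η t a * ℓ t a ≥ -1)
    (ξ : ℕ → 𝒜 → ℝ)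
    (hξ : ∀ t a, ξ t a = min (p t a * Real.log T) (1 - p t a))
    (u : 𝒜 → ℝ) (hu_nonneg : ∀ a, 0 ≤ u a) (hu_sum : ∑ a, u a = 1) :
    ∑ t ∈ Finset.Icc 1 T, ∑ a, (p t a - u a) * ℓ t a
      ≤ Real.log A / η₀
        + 6 * ∑ t ∈ Finset.Icc 1 T, ∑ a, (1 / η t a - 1 / η (t - 1) a) * ξ t a
        + ∑ t ∈ Finset.Icc 1 T, ∑ a, η t a * p t a * ℓ t a ^ 2
        + (1 / (T : ℝ) ^ 2) * ∑ t ∈ Finset.Icc 1 T, ∑ a, (-(u a) + 1 / A) * ℓ t a := by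
  subst hA
  have hu : u ∈ stdSimplex ℝ 𝒜 := ⟨hu_nonneg, hu_sum⟩
  have hp : ∀ t, 1 ≤ t → t ≤ T → p t ∈ stdSimplex ℝ 𝒜 :=
    fun t h₁ h₂ => ⟨fun a => (hp_pos t h₁ h₂ a).le, hp_sum t h₁ h₂⟩
  obtain ⟨a₀⟩ := nonempty_of_mem_stdSimplex hu
  obtain rfl : ξ = fun t a => min (p t a * Real.log T) (1 - p t a) := funext₂ hξ
  obtain hA₁ | hA₂ : Fintype.card 𝒜 = 1 ∨ 2 ≤ Fintype.card 𝒜 := by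
    have := Fintype.card_pos_iff.2 ⟨a₀⟩; omega
  · exact regret_le_of_card_eq_one hA₁ hT η₀ (fun t _ => hη_pos t) hp hu
  have hmin : ∀ t, 1 ≤ t → t ≤ T →
      IsMinOn (ftrlObjective (cumLoss ℓ (t - 1)) fun a => 1 / η t a) (stdSimplex ℝ 𝒜) (p t) :=
    fun t h₁ h₂ q hq => by
      have h := hp_min t h₁ h₂ q hq.1 hq.2
      simp only [hψ] at h
      exact h
  have hγ : 1 / (T : ℝ) ^ 2 ≤ 1 := by
    rw [div_le_one (by positivity)]; exact one_le_pow₀ (by exact_mod_cast hT)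
  have hη₀ : 0 ≤ η₀ := hη_init a₀ ▸ (hη_pos 0 T.zero_le a₀).le
  have hregret := ftrl_regret_le hT (fun t _ => hη_pos t) hη₀ hη_init hp hp_pos hmin hℓ
    (mixUniform_mem_stdSimplex (by positivity) hγ hu)
  have hpenalty := penalty_add_regularizer_mixUniform_le hA₂ hAT hη_pos hη_mono hp hu
  rw [sum_sub_mul_eq_sum_sub_mixUniform_mul ℓ p u (1 / (T : ℝ) ^ 2)]
  linarith
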